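/- arXiv:0801.1088 — 2 statements merged into one kernel-verified Lean document; each statement's English description precedes it below -/
import Mathlib

section
/- Let y be a nondegenerate L² map from D to ℝ^d with polar factorization y = y* ∘ X, where y* is the unique rearrangement of y with convex potential and X is a Lebesgue-measure-preserving map of D. Then X is the unique (up to almost-everywhere equality) minimizer of the functional X′ ↦ ∫_D |X′(a) − y(a)|² da over all Lebesgue-measure-preserving maps X′ of D. -/
open MeasureTheory Set

noncomputable section

/-- `D` is the closure of a bounded connected open set in `ℝ^d`, its boundary is
Lebesgue-negligible, and it has Lebesgue measure `1`. -/
def IsNiceDomain {d : ℕ} (D : Set (EuclideanSpace ℝ (Fin d))) : Prop :=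
  (∃ U : Set (EuclideanSpace ℝ (Fin d)),
      IsOpen U ∧ IsConnected U ∧ Bornology.IsBounded U ∧ D = closure U) ∧
  volume (frontier D) = 0 ∧ volume D = 1

/-- The map `y` belongs to the class `C` of maps with a convex potential. -/
def HasConvexPotential {d : ℕ} (D : Set (EuclideanSpace ℝ (Fin d)))
    (y : EuclideanSpace ℝ (Fin d) → EuclideanSpace ℝ (Fin d)) : Prop :=
  ∃ p : EuclideanSpace ℝ (Fin d) → EReal,
    LowerSemicontinuous p ∧
    (∀ x z : EuclideanSpace ℝ (Fin d), ∀ t : ℝ, 0 ≤ t → t ≤ 1 →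
      p (t • x + (1 - t) • z) ≤ (t : EReal) * p x + ((1 - t : ℝ) : EReal) * p z) ∧
    (∀ᵐ x ∂(volume.restrict D), ∃ f : EuclideanSpace ℝ (Fin d) → ℝ,
      (∀ᶠ z in nhds x, p z = (f z : EReal)) ∧ HasGradientAt f (y x) x)

/-- `y` is nondegenerate: preimages of Lebesgue-negligible sets are negligible (in `D`). -/
def Nondegenerate {d : ℕ} (D : Set (EuclideanSpace ℝ (Fin d)))
    (y : EuclideanSpace ℝ (Fin d) → EuclideanSpace ℝ (Fin d)) : Prop :=
  ∀ N : Set (EuclideanSpace ℝ (Fin d)), volume N = 0 → volume (y ⁻¹' N ∩ D) = 0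

/-- A (Borel) Lebesgue-measure-preserving map of `D`. -/
def MeasurePreservingMapOf {d : ℕ} (D : Set (EuclideanSpace ℝ (Fin d)))
    (X : EuclideanSpace ℝ (Fin d) → EuclideanSpace ℝ (Fin d)) : Prop :=
  Measurable X ∧ MapsTo X D D ∧
    Measure.map X (volume.restrict D) = volume.restrict D

/-!
Let `p` be the convex potential of `y*`, `g = p` on `S = D ∩ {p < ⊤}` and
`g* b = sup_{x ∈ S} (⟪b, x⟫ - g x)`. By the Fenchel–Young inequality, for `x ∈ S`,
`‖x - b‖² ≥ (‖x‖² - 2 g x) + (‖b‖² - 2 g* b)`, with equality iff `x` attains `g* b`, in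
particular when `b` is a subgradient of `g` at `x`. For `b = y a = ∇p (X a)` equality holds at
`x = X a`, and the first bracket has the same integral along `X` and `X'` since both push the
Lebesgue measure of `D` to itself; hence `∫ ‖X - y‖² ≤ ∫ ‖X' - y‖²`. In case of equality `X' a`
also attains `g* (y a)`, so `X a` and `X' a` are both subgradients of `g*` at `y a`. Now `g*` is
Lipschitz, hence differentiable a.e. (Rademacher), and nondegeneracy of `y` makes it
differentiable at `y a` for a.e. `a`, which forces `X' a = X a`.
-/

open Filter Topology
open scoped RealInnerProductSpace

theorem HasDerivAt.le_of_eventually_le_add_mul {q : ℝ → ℝ} {q' m a : ℝ} (hq : HasDerivAt q q' a)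
    (h : ∀ᶠ t in 𝓝[>] a, q t ≤ q a + (t - a) * m) : q' ≤ m := by
  refine le_of_tendsto ((hasDerivAt_iff_tendsto_slope.1 hq).mono_left
    (nhdsWithin_mono a (show Ioi a ⊆ {a}ᶜ from fun t ht => ne_of_gt ht))) ?_
  filter_upwards [h, self_mem_nhdsWithin] with t ht (hat : a < t)
  rw [slope_def_field, div_le_iff₀ (sub_pos.2 hat)]
  linarith

section Subgradient

variable {E : Type*} [NormedAddCommGroup E] [InnerProductSpace ℝ E] {S : Set E} {g : E → ℝ}

def IsSubgradientOn (S : Set E) (g : E → ℝ) (x v : E) : Prop :=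
  ∀ z ∈ S, g x + ⟪v, z - x⟫ ≤ g z

theorem IsSubgradientOn.bddBelow_image {x v : E} (h : IsSubgradientOn S g x v)
    (hS : Bornology.IsBounded S) : BddBelow (g '' S) := by
  obtain ⟨R, hR⟩ := isBounded_iff_forall_norm_le.1 hS
  refine ⟨g x - ‖v‖ * (R + ‖x‖), ?_⟩
  rintro _ ⟨z, hz, rfl⟩
  have hzx : ‖z - x‖ ≤ R + ‖x‖ := (norm_sub_le z x).trans (by linarith [hR z hz])
  have hinner : -(‖v‖ * ‖z - x‖) ≤ ⟪v, z - x⟫ := neg_le_of_abs_le (abs_real_inner_le_norm v _)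
  nlinarith [h z hz, norm_nonneg v]

theorem IsSubgradientOn.fderiv_eq {φ : E → ℝ} {b x : E} (h : IsSubgradientOn univ φ b x)
    (hφ : DifferentiableAt ℝ φ b) : fderiv ℝ φ b = innerSL ℝ x := by
  have hmin : IsLocalMin (fun c => φ c - ⟪x, c⟫) b := Eventually.of_forall fun c => by
    have := h c trivial
    rw [inner_sub_right] at this
    linarith
  exact sub_eq_zero.1 (hmin.hasFDerivAt_eq_zero (hφ.hasFDerivAt.sub (innerSL ℝ x).hasFDerivAt))

theorem IsSubgradientOn.eq_of_differentiableAt {φ : E → ℝ} {b x₁ x₂ : E}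
    (h₁ : IsSubgradientOn univ φ b x₁) (h₂ : IsSubgradientOn univ φ b x₂)
    (hφ : DifferentiableAt ℝ φ b) : x₁ = x₂ :=
  innerSL_inj.1 ((h₁.fderiv_eq hφ).symm.trans (h₂.fderiv_eq hφ))

/-- A junk value unless `S` is bounded and `g` is bounded below on `S`. -/
def conjugateOn (S : Set E) (g : E → ℝ) (b : E) : ℝ :=
  ⨆ x : S, ⟪b, (x : E)⟫ - g x

theorem bddAbove_range_inner_sub (hS : Bornology.IsBounded S) (hg : BddBelow (g '' S)) (b : E) :
    BddAbove (range fun x : S => ⟪b, (x : E)⟫ - g x) := by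
  obtain ⟨R, hR⟩ := isBounded_iff_forall_norm_le.1 hS
  obtain ⟨m, hm⟩ := hg
  refine ⟨‖b‖ * R - m, ?_⟩
  rintro _ ⟨⟨x, hx⟩, rfl⟩
  have hinner : ⟪b, x⟫ ≤ ‖b‖ * R :=
    (real_inner_le_norm b x).trans (mul_le_mul_of_nonneg_left (hR x hx) (norm_nonneg b))
  linarith [hm (mem_image_of_mem g hx)]

theorem inner_sub_le_conjugateOn (hS : Bornology.IsBounded S) (hg : BddBelow (g '' S)) {x : E}
    (hx : x ∈ S) (b : E) : ⟪b, x⟫ - g x ≤ conjugateOn S g b :=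
  le_ciSup (bddAbove_range_inner_sub hS hg b) ⟨x, hx⟩

theorem conjugateOn_eq_of_isSubgradientOn (hS : Bornology.IsBounded S) (hg : BddBelow (g '' S))
    {x b : E} (hx : x ∈ S) (h : IsSubgradientOn S g x b) : conjugateOn S g b = ⟪b, x⟫ - g x := by
  have : Nonempty S := ⟨⟨x, hx⟩⟩
  refine le_antisymm (ciSup_le fun z => ?_) (inner_sub_le_conjugateOn hS hg hx b)
  have := h z z.2
  rw [inner_sub_right] at this
  linarith

theorem isSubgradientOn_conjugateOn (hS : Bornology.IsBounded S) (hg : BddBelow (g '' S))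
    {x b : E} (hx : x ∈ S) (h : conjugateOn S g b = ⟪b, x⟫ - g x) :
    IsSubgradientOn univ (conjugateOn S g) b x := fun c _ => by
  have := inner_sub_le_conjugateOn hS hg hx c
  rw [h, inner_sub_right, real_inner_comm c x, real_inner_comm b x]
  linarith

theorem lipschitzWith_conjugateOn {R : ℝ} (hR : ∀ x ∈ S, ‖x‖ ≤ R) (hg : BddBelow (g '' S)) :
    LipschitzWith R.toNNReal (conjugateOn S g) := by
  rcases isEmpty_or_nonempty S with hempty | hne
  · rw [show conjugateOn S g = fun _ => 0 from funext fun b => Real.iSup_of_isEmpty _]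
    exact LipschitzWith.const' 0
  have hS : Bornology.IsBounded S := isBounded_iff_forall_norm_le.2 ⟨R, hR⟩
  refine LipschitzWith.of_le_add_mul _ fun b c => ciSup_le fun x => ?_
  have hinner : ⟪b - c, (x : E)⟫ ≤ R.toNNReal * dist b c := by
    rw [dist_eq_norm, mul_comm]
    exact (real_inner_le_norm _ _).trans (mul_le_mul_of_nonneg_left
      ((hR x x.2).trans (Real.le_coe_toNNReal R)) (norm_nonneg _))
  have := inner_sub_le_conjugateOn hS hg x.2 c
  rw [inner_sub_left] at hinner
  linarith

theorem norm_sub_sq_eq_of_isSubgradientOn (hS : Bornology.IsBounded S) (hg : BddBelow (g '' S))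
    {x b : E} (hx : x ∈ S) (h : IsSubgradientOn S g x b) :
    ‖x - b‖ ^ 2 = ‖x‖ ^ 2 - 2 * g x + (‖b‖ ^ 2 - 2 * conjugateOn S g b) := by
  rw [conjugateOn_eq_of_isSubgradientOn hS hg hx h, norm_sub_sq_real, real_inner_comm]
  ring

theorem add_le_norm_sub_sq (hS : Bornology.IsBounded S) (hg : BddBelow (g '' S)) {x : E}
    (hx : x ∈ S) (b : E) : ‖x‖ ^ 2 - 2 * g x + (‖b‖ ^ 2 - 2 * conjugateOn S g b) ≤ ‖x - b‖ ^ 2 := by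
  have := inner_sub_le_conjugateOn hS hg hx b
  rw [norm_sub_sq_real, real_inner_comm]
  linarith

theorem conjugateOn_eq_of_norm_sub_sq_eq {x b : E}
    (h : ‖x‖ ^ 2 - 2 * g x + (‖b‖ ^ 2 - 2 * conjugateOn S g b) = ‖x - b‖ ^ 2) :
    conjugateOn S g b = ⟪b, x⟫ - g x := by
  rw [norm_sub_sq_real, real_inner_comm] at h
  linarith

end Subgradient

section Gradient

variable {E : Type*} [NormedAddCommGroup E] [InnerProductSpace ℝ E] [CompleteSpace E]

theorem EReal.coe_add_inner_le_of_hasGradientAt {p : E → EReal}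
    (hconv : ∀ x z : E, ∀ t : ℝ, 0 ≤ t → t ≤ 1 →
      p (t • x + (1 - t) • z) ≤ (t : EReal) * p x + ((1 - t : ℝ) : EReal) * p z)
    {f : E → ℝ} {x v : E} (hpf : ∀ᶠ z in 𝓝 x, p z = f z) (hf : HasGradientAt f v x) (z : E) :
    ((f x + ⟪v, z - x⟫ : ℝ) : EReal) ≤ p z := by
  refine le_of_forall_gt_imp_ge_of_dense fun c hc => ?_
  induction c using EReal.rec with
  | bot => exact absurd hc not_lt_bot
  | top => exact le_top
  | coe r =>
    rw [EReal.coe_le_coe_iff]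
    have hline : HasDerivAt (fun t : ℝ => x + t • (z - x)) (z - x) 0 := by
      simpa using ((hasDerivAt_id (0 : ℝ)).smul_const (z - x)).const_add x
    have hq : HasDerivAt (fun t : ℝ => f (x + t • (z - x))) ⟪v, z - x⟫ 0 := by
      have hf' : HasFDerivAt f (InnerProductSpace.toDual ℝ E v) (x + (0 : ℝ) • (z - x)) := by
        simpa using hf.hasFDerivAt
      simpa [Function.comp_def] using hf'.comp_hasDerivAt 0 hline
    have hnear : ∀ᶠ t in 𝓝 (0 : ℝ), p (x + t • (z - x)) = f (x + t • (z - x)) :=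
      hline.continuousAt.eventually (by simpa using hpf)
    have hsec : ∀ᶠ t in 𝓝[>] (0 : ℝ),
        f (x + t • (z - x)) ≤ f (x + (0 : ℝ) • (z - x)) + (t - 0) * (r - f x) := by
      filter_upwards [nhdsWithin_le_nhds hnear, nhdsWithin_le_nhds (gt_mem_nhds one_pos),
        self_mem_nhdsWithin] with t hpt ht1 ht0
      have hcv := hconv z x t (le_of_lt ht0) ht1.le
      rw [show t • z + (1 - t) • x = x + t • (z - x) by module, hpt, hpf.self_of_nhds] at hcv
      have hcv' : f (x + t • (z - x)) ≤ t * r + (1 - t) * f x := by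
        refine EReal.coe_le_coe_iff.1 (hcv.trans ?_)
        push_cast
        gcongr
        exact_mod_cast ht0.le
      simp only [zero_smul, add_zero, sub_zero]
      linarith
    linarith [hq.le_of_eventually_le_add_mul hsec]

theorem isSubgradientOn_toReal_of_hasGradientAt {p : E → EReal}
    (hconv : ∀ x z : E, ∀ t : ℝ, 0 ≤ t → t ≤ 1 →
      p (t • x + (1 - t) • z) ≤ (t : EReal) * p x + ((1 - t : ℝ) : EReal) * p z)
    {f : E → ℝ} {x v : E} (hpf : ∀ᶠ z in 𝓝 x, p z = f z) (hf : HasGradientAt f v x)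
    {S : Set E} (hS : ∀ z ∈ S, p z ≠ ⊤) : IsSubgradientOn S (fun z => (p z).toReal) x v := by
  intro z hz
  have h := EReal.coe_add_inner_le_of_hasGradientAt hconv hpf hf z
  have hbot : p z ≠ ⊥ := ne_bot_of_le_ne_bot (EReal.coe_ne_bot _) h
  simp only [hpf.self_of_nhds, EReal.toReal_coe]
  exact EReal.coe_le_coe_iff.1 (h.trans_eq (EReal.coe_toReal (hS z hz) hbot).symm)

end Gradient

section Integrability

variable {α β : Type*} [MeasurableSpace α] [MeasurableSpace β] {μ : Measure α}

theorem LipschitzWith.integrable_comp [IsFiniteMeasure μ] {E F : Type*} [NormedAddCommGroup E]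
    [NormedAddCommGroup F] {K : NNReal} {φ : E → F} (hφ : LipschitzWith K φ) {y : α → E}
    (hy : Integrable y μ) : Integrable (fun a => φ (y a)) μ := by
  refine Integrable.mono' ((integrable_const ‖φ 0‖).add (hy.norm.const_mul K))
    (hφ.continuous.comp_aestronglyMeasurable hy.1) (Eventually.of_forall fun a => ?_)
  have := hφ.norm_sub_le (y a) 0
  rw [sub_zero] at this
  show ‖φ (y a)‖ ≤ ‖φ 0‖ + K * ‖y a‖
  linarith [norm_le_insert' (φ (y a)) (φ 0)]

theorem MeasureTheory.Integrable.comp_of_map_eq_map {X X' : α → β} {f : β → ℝ} (hf : Measurable f)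
    (hX : Measurable X) (hX' : Measurable X') (hlaw : μ.map X' = μ.map X)
    (h : Integrable (fun a => f (X a)) μ) : Integrable (fun a => f (X' a)) μ := by
  refine (integrable_map_measure hf.aestronglyMeasurable hX'.aemeasurable).1 ?_
  rw [hlaw]
  exact (integrable_map_measure hf.aestronglyMeasurable hX.aemeasurable).2 h

theorem integral_comp_eq_of_map_eq_map {X X' : α → β} {f : β → ℝ} (hf : Measurable f)
    (hX : Measurable X) (hX' : Measurable X') (hlaw : μ.map X' = μ.map X) :
    ∫ a, f (X' a) ∂μ = ∫ a, f (X a) ∂μ := by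
  rw [← integral_map hX'.aemeasurable hf.aestronglyMeasurable, hlaw,
    integral_map hX.aemeasurable hf.aestronglyMeasurable]

theorem integrable_norm_sq_sub_two_mul_conjugateOn [IsFiniteMeasure μ] {E : Type*}
    [NormedAddCommGroup E] [InnerProductSpace ℝ E] {S : Set E} {g : E → ℝ} {y : α → E}
    (hS : Bornology.IsBounded S) (hg : BddBelow (g '' S)) (hy : MemLp y 2 μ) :
    Integrable (fun a => ‖y a‖ ^ 2 - 2 * conjugateOn S g (y a)) μ := by
  obtain ⟨R, hR⟩ := isBounded_iff_forall_norm_le.1 hS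
  exact ((memLp_two_iff_integrable_sq_norm hy.1).1 hy).sub
    (((lipschitzWith_conjugateOn hR hg).integrable_comp (hy.integrable one_le_two)).const_mul 2)

end Integrability

section Brenier

variable {α E : Type*} [MeasurableSpace α] {μ : Measure α} [IsFiniteMeasure μ]
  [NormedAddCommGroup E] [InnerProductSpace ℝ E] [FiniteDimensional ℝ E]
  [MeasurableSpace E] [BorelSpace E] {S : Set E} {g : E → ℝ} {X X' y : α → E}

theorem integrable_norm_sub_sq (hS : Bornology.IsBounded S) (hX : Measurable X)
    (hXS : ∀ᵐ a ∂μ, X a ∈ S) (hy : MemLp y 2 μ) :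
    Integrable (fun a => ‖X a - y a‖ ^ 2) μ := by
  obtain ⟨R, hR⟩ := isBounded_iff_forall_norm_le.1 hS
  have hXy : MemLp (X - y) 2 μ :=
    (MemLp.of_bound hX.aestronglyMeasurable R (hXS.mono fun a ha => hR _ ha)).sub hy
  exact (memLp_two_iff_integrable_sq_norm hXy.1).1 hXy

theorem integrable_norm_sq_sub_two_mul_comp (hS : Bornology.IsBounded S)
    (hg : BddBelow (g '' S)) (hgm : Measurable g) (hX : Measurable X) (hX' : Measurable X')
    (hlaw : μ.map X' = μ.map X) (hy : MemLp y 2 μ)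
    (hsub : ∀ᵐ a ∂μ, X a ∈ S ∧ IsSubgradientOn S g (X a) (y a)) :
    Integrable (fun a => ‖X' a‖ ^ 2 - 2 * g (X' a)) μ := by
  refine Integrable.comp_of_map_eq_map (f := fun x => ‖x‖ ^ 2 - 2 * g x) (by fun_prop) hX hX' hlaw
    (((integrable_norm_sub_sq hS hX (hsub.mono fun a ha => ha.1) hy).sub
      (integrable_norm_sq_sub_two_mul_conjugateOn hS hg hy)).congr ?_)
  filter_upwards [hsub] with a ha
  rw [Pi.sub_apply, norm_sub_sq_eq_of_isSubgradientOn hS hg ha.1 ha.2]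
  ring

theorem integral_norm_sub_sq_eq_of_map_eq_map (hS : Bornology.IsBounded S)
    (hg : BddBelow (g '' S)) (hgm : Measurable g) (hX : Measurable X) (hX' : Measurable X')
    (hlaw : μ.map X' = μ.map X) (hy : MemLp y 2 μ)
    (hsub : ∀ᵐ a ∂μ, X a ∈ S ∧ IsSubgradientOn S g (X a) (y a)) :
    ∫ a, ‖X a - y a‖ ^ 2 ∂μ =
      ∫ a, (‖X' a‖ ^ 2 - 2 * g (X' a) + (‖y a‖ ^ 2 - 2 * conjugateOn S g (y a))) ∂μ := by
  have hΨ := integrable_norm_sq_sub_two_mul_conjugateOn hS hg hy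
  rw [integral_add (integrable_norm_sq_sub_two_mul_comp hS hg hgm hX hX' hlaw hy hsub) hΨ,
    integral_comp_eq_of_map_eq_map (f := fun x => ‖x‖ ^ 2 - 2 * g x) (by fun_prop) hX hX' hlaw,
    ← integral_add (integrable_norm_sq_sub_two_mul_comp hS hg hgm hX hX rfl hy hsub) hΨ]
  refine integral_congr_ae ?_
  filter_upwards [hsub] with a ha using norm_sub_sq_eq_of_isSubgradientOn hS hg ha.1 ha.2

theorem integral_norm_sub_sq_le_of_map_eq_map (hS : Bornology.IsBounded S)
    (hg : BddBelow (g '' S)) (hgm : Measurable g) (hX : Measurable X) (hX' : Measurable X')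
    (hlaw : μ.map X' = μ.map X) (hX'S : ∀ᵐ a ∂μ, X' a ∈ S) (hy : MemLp y 2 μ)
    (hsub : ∀ᵐ a ∂μ, X a ∈ S ∧ IsSubgradientOn S g (X a) (y a)) :
    ∫ a, ‖X a - y a‖ ^ 2 ∂μ ≤ ∫ a, ‖X' a - y a‖ ^ 2 ∂μ := by
  rw [integral_norm_sub_sq_eq_of_map_eq_map hS hg hgm hX hX' hlaw hy hsub]
  refine integral_mono_ae ((integrable_norm_sq_sub_two_mul_comp hS hg hgm hX hX' hlaw hy hsub).add
    (integrable_norm_sq_sub_two_mul_conjugateOn hS hg hy)) (integrable_norm_sub_sq hS hX' hX'S hy) ?_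
  filter_upwards [hX'S] with a ha using add_le_norm_sub_sq hS hg ha (y a)

theorem ae_eq_of_integral_norm_sub_sq_eq (hS : Bornology.IsBounded S)
    (hg : BddBelow (g '' S)) (hgm : Measurable g) (hX : Measurable X) (hX' : Measurable X')
    (hlaw : μ.map X' = μ.map X) (hX'S : ∀ᵐ a ∂μ, X' a ∈ S) (hy : MemLp y 2 μ)
    (hsub : ∀ᵐ a ∂μ, X a ∈ S ∧ IsSubgradientOn S g (X a) (y a))
    (hdiff : ∀ᵐ a ∂μ, DifferentiableAt ℝ (conjugateOn S g) (y a))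
    (heq : ∫ a, ‖X' a - y a‖ ^ 2 ∂μ = ∫ a, ‖X a - y a‖ ^ 2 ∂μ) : X' =ᵐ[μ] X := by
  have hF : Integrable (fun a => ‖X' a‖ ^ 2 - 2 * g (X' a) +
      (‖y a‖ ^ 2 - 2 * conjugateOn S g (y a))) μ :=
    (integrable_norm_sq_sub_two_mul_comp hS hg hgm hX hX' hlaw hy hsub).add
      (integrable_norm_sq_sub_two_mul_conjugateOn hS hg hy)
  have hle : ∀ᵐ a ∂μ, ‖X' a‖ ^ 2 - 2 * g (X' a) + (‖y a‖ ^ 2 - 2 * conjugateOn S g (y a)) ≤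
      ‖X' a - y a‖ ^ 2 := by
    filter_upwards [hX'S] with a ha using add_le_norm_sub_sq hS hg ha (y a)
  rw [integral_norm_sub_sq_eq_of_map_eq_map hS hg hgm hX hX' hlaw hy hsub, eq_comm,
    integral_eq_iff_of_ae_le hF (integrable_norm_sub_sq hS hX' hX'S hy) hle] at heq
  filter_upwards [hX'S, hsub, hdiff, heq] with a hX'a ⟨hXa, hsuba⟩ hda hFa
  exact (isSubgradientOn_conjugateOn hS hg hX'a (conjugateOn_eq_of_norm_sub_sq_eq hFa))
    |>.eq_of_differentiableAt (isSubgradientOn_conjugateOn hS hg hXa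
      (conjugateOn_eq_of_isSubgradientOn hS hg hXa hsuba)) hda

end Brenier

section Domain

variable {d : ℕ} {D : Set (EuclideanSpace ℝ (Fin d))}

theorem IsNiceDomain.measurableSet (hD : IsNiceDomain D) : MeasurableSet D := by
  obtain ⟨⟨U, -, -, -, rfl⟩, -⟩ := hD
  exact isClosed_closure.measurableSet

theorem IsNiceDomain.isBounded (hD : IsNiceDomain D) : Bornology.IsBounded D := by
  obtain ⟨⟨U, -, -, hU, rfl⟩, -⟩ := hD
  exact hU.closure

theorem MeasurePreservingMapOf.ae_comp {Z : EuclideanSpace ℝ (Fin d) → EuclideanSpace ℝ (Fin d)}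
    (hZ : MeasurePreservingMapOf D Z) {P : EuclideanSpace ℝ (Fin d) → Prop}
    (h : ∀ᵐ x ∂(volume.restrict D), P x) : ∀ᵐ a ∂(volume.restrict D), P (Z a) :=
  ae_of_ae_map hZ.1.aemeasurable (hZ.2.2.symm ▸ h)

theorem Nondegenerate.ae_differentiableAt_comp
    {y : EuclideanSpace ℝ (Fin d) → EuclideanSpace ℝ (Fin d)} (hy : Nondegenerate D y)
    (hD : MeasurableSet D) {K : NNReal} {φ : EuclideanSpace ℝ (Fin d) → ℝ}
    (hφ : LipschitzWith K φ) : ∀ᵐ a ∂(volume.restrict D), DifferentiableAt ℝ φ (y a) := by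
  rw [ae_iff, Measure.restrict_apply' hD]
  exact hy _ (ae_iff.1 hφ.ae_differentiableAt)

end Domain

theorem polar_factor_minimizes_general
    {d : ℕ} (D : Set (EuclideanSpace ℝ (Fin d))) (hD : IsNiceDomain D)
    (y : EuclideanSpace ℝ (Fin d) → EuclideanSpace ℝ (Fin d))
    (hyL2 : MemLp y 2 (volume.restrict D))
    (hynd : Nondegenerate D y)
    -- `ys = y*` : the unique rearrangement of `y` in the class `C`
    (ys : EuclideanSpace ℝ (Fin d) → EuclideanSpace ℝ (Fin d))
    (hysC : HasConvexPotential D ys)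
    -- `X` : the measure-preserving factor of the polar factorization `y = y* ∘ X`
    (X : EuclideanSpace ℝ (Fin d) → EuclideanSpace ℝ (Fin d))
    (hX : MeasurePreservingMapOf D X)
    (hfact : ∀ᵐ a ∂(volume.restrict D), y a = ys (X a)) :
    ∀ X' : EuclideanSpace ℝ (Fin d) → EuclideanSpace ℝ (Fin d),
      MeasurePreservingMapOf D X' →
      (∫ a in D, ‖X a - y a‖ ^ 2) ≤ (∫ a in D, ‖X' a - y a‖ ^ 2) ∧
      ((∫ a in D, ‖X' a - y a‖ ^ 2) = (∫ a in D, ‖X a - y a‖ ^ 2) →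
        X' =ᵐ[volume.restrict D] X) := by
  intro X' hX'
  have : IsFiniteMeasure (volume.restrict D) := isFiniteMeasure_restrict.2 (by simp [hD.2.2])
  have : (ae (volume.restrict D)).NeBot := ae_neBot.2 (by simp [hD.2.2])
  obtain ⟨p, hplsc, hpconv, hpdiff⟩ := hysC
  set S := {x | x ∈ D ∧ p x ≠ ⊤}
  set g := fun x => (p x).toReal
  obtain ⟨R, hR⟩ := isBounded_iff_forall_norm_le.1 hD.isBounded
  have hSR : ∀ x ∈ S, ‖x‖ ≤ R := fun x hx => hR x hx.1
  have hSb : Bornology.IsBounded S := isBounded_iff_forall_norm_le.2 ⟨R, hSR⟩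
  have hgood : ∀ᵐ x ∂(volume.restrict D), x ∈ S ∧ IsSubgradientOn S g x (ys x) := by
    filter_upwards [ae_restrict_mem hD.measurableSet, hpdiff] with x hxD ⟨f, hpf, hf⟩
    exact ⟨⟨hxD, hpf.self_of_nhds ▸ EReal.coe_ne_top _⟩,
      isSubgradientOn_toReal_of_hasGradientAt hpconv hpf hf fun z hz => hz.2⟩
  obtain ⟨x₀, -, hx₀⟩ := hgood.exists
  have hgS : BddBelow (g '' S) := hx₀.bddBelow_image hSb
  have hgm : Measurable g := measurable_ereal_toReal.comp hplsc.measurable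
  have hlaw := hX'.2.2.trans hX.2.2.symm
  have hX'S := (hX'.ae_comp hgood).mono fun a ha => ha.1
  have hsub : ∀ᵐ a ∂(volume.restrict D), X a ∈ S ∧ IsSubgradientOn S g (X a) (y a) := by
    filter_upwards [hX.ae_comp hgood, hfact] with a ha hya
    rwa [hya]
  have hdiff := hynd.ae_differentiableAt_comp hD.measurableSet (lipschitzWith_conjugateOn hSR hgS)
  exact ⟨integral_norm_sub_sq_le_of_map_eq_map hSb hgS hgm hX.1 hX'.1 hlaw hX'S hyL2 hsub,
    ae_eq_of_integral_norm_sub_sq_eq hSb hgS hgm hX.1 hX'.1 hlaw hX'S hyL2 hsub hdiff⟩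

/-- **The measure-preserving factor is the closest measure-preserving map.**
If `y = y* ∘ X` is the polar factorization of the nondegenerate `L²` map `y`, then `X` is
the unique (up to a.e. equality) minimizer of `X' ↦ ∫_D |X'(a) - y(a)|² da` over all
Lebesgue-measure-preserving maps `X'` of `D`. -/
theorem polar_factor_minimizes
    {d : ℕ} (D : Set (EuclideanSpace ℝ (Fin d))) (hD : IsNiceDomain D)
    (y : EuclideanSpace ℝ (Fin d) → EuclideanSpace ℝ (Fin d))
    (hy : Measurable y) (hyL2 : MemLp y 2 (volume.restrict D))
    (hynd : Nondegenerate D y)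
    -- `ys = y*` : the unique rearrangement of `y` in the class `C`
    (ys : EuclideanSpace ℝ (Fin d) → EuclideanSpace ℝ (Fin d))
    (hysm : Measurable ys) (hysC : HasConvexPotential D ys)
    (hysr : Measure.map ys (volume.restrict D) = Measure.map y (volume.restrict D))
    -- `X` : the measure-preserving factor of the polar factorization `y = y* ∘ X`
    (X : EuclideanSpace ℝ (Fin d) → EuclideanSpace ℝ (Fin d))
    (hX : MeasurePreservingMapOf D X)
    (hfact : ∀ᵐ a ∂(volume.restrict D), y a = ys (X a)) :
    ∀ X' : EuclideanSpace ℝ (Fin d) → EuclideanSpace ℝ (Fin d),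
      MeasurePreservingMapOf D X' →
      (∫ a in D, ‖X a - y a‖ ^ 2) ≤ (∫ a in D, ‖X' a - y a‖ ^ 2) ∧
      ((∫ a in D, ‖X' a - y a‖ ^ 2) = (∫ a in D, ‖X a - y a‖ ^ 2) →
        X' =ᵐ[volume.restrict D] X) :=
  polar_factor_minimizes_general D hD y hyL2 hynd ys hysC X hX hfact
end
end

section
/- Let y⁰ be an L² map from D to ℝ^d and let y* denote its unique rearrangement with convex potential. Then, among all rearrangements y of y⁰ (i.e., all L² maps defining the same image measure as y⁰), y* is the unique (up to almost-everywhere equality) minimizer of the transportation cost ∫_D |y(x) − x|² dx. -/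
/-!
Brenier's argument through Fenchel–Young duality. Let `φ` be the convex potential, so that
`ys = ∇φ` a.e., and let `φ*` be its Legendre transform. Fenchel–Young gives
`⟪y x, x⟫ ≤ φ x + φ* (y x)`, with equality when `y x = ∇φ x`. Since `y` and `ys` have the same
law, `∫ φ* ∘ y = ∫ φ* ∘ ys` and `∫ ‖y‖² = ∫ ‖ys‖²`, hence `∫ ⟪y x, x⟫ ≤ ∫ ⟪ys x, x⟫`, which is
the inequality once the squares are expanded. In the case of equality, Fenchel–Young is an
equality a.e., so `y x` is a subgradient of `φ` at `x`, and therefore equals `∇φ x = ys x`.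

These integrals make sense because `φ*` lies above an affine function: minus that function, `φ*`
is nonnegative, and its integral against the common law of `y` and `ys` is finite because along
`ys` it is given by the Fenchel–Young equality.
-/

open MeasureTheory Set

noncomputable section

open Filter Topology RealInnerProductSpace
open scoped ENNReal

section Pushforward

variable {α β : Type*} [MeasurableSpace α] [MeasurableSpace β] {μ : Measure α} {y z : α → β}

theorem lintegral_comp_eq_of_map_eq (hy : Measurable y) (hz : Measurable z)
    (hmap : μ.map y = μ.map z) {G : β → ℝ≥0∞} (hG : Measurable G) :
    ∫⁻ x, G (y x) ∂μ = ∫⁻ x, G (z x) ∂μ := by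
  rw [← lintegral_map hG hy, ← lintegral_map hG hz, hmap]

theorem integral_comp_eq_of_map_eq (hy : Measurable y) (hz : Measurable z)
    (hmap : μ.map y = μ.map z) {G : β → ℝ} (hG : AEStronglyMeasurable G (μ.map z)) :
    ∫ x, G (y x) ∂μ = ∫ x, G (z x) ∂μ := by
  rw [← integral_map hy.aemeasurable (hmap ▸ hG), ← integral_map hz.aemeasurable hG, hmap]

theorem integrable_toReal_comp_of_map_eq (hy : Measurable y) (hz : Measurable z)
    (hmap : μ.map y = μ.map z) {G : β → ℝ≥0∞} (hG : Measurable G)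
    (hfin : ∫⁻ x, G (z x) ∂μ ≠ ∞) : Integrable (fun x => (G (y x)).toReal) μ :=
  integrable_toReal_of_lintegral_ne_top (hG.comp hy).aemeasurable
    (lintegral_comp_eq_of_map_eq hy hz hmap hG ▸ hfin)

theorem integral_toReal_comp_eq_of_map_eq (hy : Measurable y) (hz : Measurable z)
    (hmap : μ.map y = μ.map z) {G : β → ℝ≥0∞} (hG : Measurable G)
    (hfin : ∫⁻ x, G (z x) ∂μ ≠ ∞) :
    ∫ x, (G (y x)).toReal ∂μ = ∫ x, (G (z x)).toReal ∂μ := by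
  have hfin' := lintegral_comp_eq_of_map_eq hy hz hmap hG ▸ hfin
  rw [integral_toReal (f := fun x => G (y x)) (hG.comp hy).aemeasurable
      (ae_lt_top (hG.comp hy) hfin'),
    integral_toReal (f := fun x => G (z x)) (hG.comp hz).aemeasurable
      (ae_lt_top (hG.comp hz) hfin),
    lintegral_comp_eq_of_map_eq hy hz hmap hG]

theorem MeasureTheory.MemLp.of_map_eq [NormedAddCommGroup β] [OpensMeasurableSpace β]
    [SecondCountableTopology β] {p : ℝ≥0∞} (hy : Measurable y) (hz : Measurable z)
    (hmap : μ.map y = μ.map z) (hyp : MemLp y p μ) : MemLp z p μ := by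
  have hid : MemLp id p (μ.map y) :=
    (memLp_map_measure_iff aestronglyMeasurable_id hy.aemeasurable).2 hyp
  exact (hmap ▸ hid).comp_of_map hz.aemeasurable

end Pushforward

theorem MeasureTheory.MemLp.integrable_inner {α E : Type*} [MeasurableSpace α] {μ : Measure α}
    [NormedAddCommGroup E] [InnerProductSpace ℝ E] {f g : α → E} (hf : MemLp f 2 μ)
    (hg : MemLp g 2 μ) : Integrable (fun x => ⟪f x, g x⟫) μ := by
  refine (L2.integrable_inner (𝕜 := ℝ) (hf.toLp f) (hg.toLp g)).congr ?_
  filter_upwards [hf.coeFn_toLp, hg.coeFn_toLp] with x hfx hgx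
  rw [hfx, hgx]

section ConvexAnalysis

variable {E : Type*} [NormedAddCommGroup E] [InnerProductSpace ℝ E]

def HasSubgradientOn (φ : E → ℝ) (A : Set E) (x b : E) : Prop :=
  ∀ a ∈ A, φ x + ⟪b, a - x⟫ ≤ φ a

def IsConvexEReal (p : E → EReal) : Prop :=
  ∀ x z : E, ∀ t : ℝ, 0 ≤ t → t ≤ 1 →
    p (t • x + (1 - t) • z) ≤ (t : EReal) * p x + ((1 - t : ℝ) : EReal) * p z

variable [CompleteSpace E]

theorem HasGradientAt.inner_le_of_eventually_le {f : E → ℝ} {g x v : E} {m : ℝ}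
    (hf : HasGradientAt f g x) (h : ∀ᶠ t in 𝓝[>] (0 : ℝ), f (x + t • v) ≤ f x + t * m) :
    ⟪g, v⟫ ≤ m := by
  have hlim := hf.hasFDerivAt.lim v (tendsto_norm_atTop_atTop.comp tendsto_inv_nhdsGT_zero)
  simp only [inv_inv, InnerProductSpace.toDual_apply_apply] at hlim
  refine le_of_tendsto hlim ?_
  filter_upwards [h, self_mem_nhdsWithin] with t ht (htpos : 0 < t)
  rw [smul_eq_mul, inv_mul_le_iff₀ htpos]
  linarith

theorem HasGradientAt.eq_of_eventually_add_inner_le {f : E → ℝ} {g x b : E} (hf : HasGradientAt f g x)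
    (h : ∀ᶠ a in 𝓝 x, f x + ⟪b, a - x⟫ ≤ f a) : b = g := by
  have hmin : IsLocalMin (fun a => f a - ⟪b, a - x⟫) x := by
    filter_upwards [h] with a ha
    simp only [sub_self, inner_zero_right, sub_zero]
    linarith
  have hderiv : HasFDerivAt (fun a => f a - ⟪b, a - x⟫)
      (InnerProductSpace.toDual ℝ E g - InnerProductSpace.toDual ℝ E b) x := by
    refine hf.hasFDerivAt.sub ?_
    simpa only [InnerProductSpace.toDual_apply_apply, inner_sub_right] using
      (InnerProductSpace.toDual ℝ E b).hasFDerivAt.sub_const (⟪b, x⟫)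
  have := hmin.hasFDerivAt_eq_zero hderiv
  exact ((InnerProductSpace.toDual ℝ E).injective (sub_eq_zero.1 this)).symm

theorem IsConvexEReal.coe_add_inner_le {p : E → EReal} (hconv : IsConvexEReal p)
    {f : E → ℝ} {x g : E} (hfp : ∀ᶠ z in 𝓝 x, p z = f z) (hf : HasGradientAt f g x) (a : E) :
    ((f x + ⟪g, a - x⟫ : ℝ) : EReal) ≤ p a := by
  have hupper : ∀ r : ℝ, p a ≤ r → f x + ⟪g, a - x⟫ ≤ r := by
    intro r hr
    suffices ⟪g, a - x⟫ ≤ r - f x by linarith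
    refine hf.inner_le_of_eventually_le ?_
    have hline : Tendsto (fun t : ℝ => x + t • (a - x)) (𝓝[>] 0) (𝓝 x) := by
      refine tendsto_nhdsWithin_of_tendsto_nhds ?_
      exact Continuous.tendsto' (by fun_prop) 0 x (by simp)
    filter_upwards [hline.eventually hfp, Ioo_mem_nhdsGT (one_pos : (0 : ℝ) < 1)] with t ht htI
    have hseg : t • a + (1 - t) • x = x + t • (a - x) := by
      rw [smul_sub, sub_smul, one_smul]; abel
    have hcv := hconv a x t htI.1.le htI.2.le
    rw [hseg, ht, hfp.self_of_nhds] at hcv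
    have : ((f (x + t • (a - x)) : ℝ) : EReal) ≤ ((t * r + (1 - t) * f x : ℝ) : EReal) := by
      refine hcv.trans ?_
      rw [EReal.coe_add, EReal.coe_mul, EReal.coe_mul]
      gcongr
      exact_mod_cast htI.1.le
    have := EReal.coe_le_coe_iff.1 this
    linarith
  induction ha : p a using EReal.rec with
  | bot => have := hupper (f x + ⟪g, a - x⟫ - 1) (by simp [ha]); linarith
  | coe r => exact EReal.coe_le_coe_iff.2 (hupper r ha.le)
  | top => exact le_top

theorem IsConvexEReal.hasSubgradientOn_toReal {p : E → EReal} (hconv : IsConvexEReal p)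
    {f : E → ℝ} {x g : E} (hfp : ∀ᶠ z in 𝓝 x, p z = f z) (hf : HasGradientAt f g x) :
    {a | p a ≠ ⊤} ∈ 𝓝 x ∧ HasGradientAt (fun a => (p a).toReal) g x ∧
      HasSubgradientOn (fun a => (p a).toReal) {a | p a ≠ ⊤} x g := by
  have hpf : (fun a => (p a).toReal) =ᶠ[𝓝 x] f :=
    hfp.mono fun z hz => by simp only [hz, EReal.toReal_coe]
  refine ⟨hfp.mono fun z hz => by simp [hz], hf.congr_of_eventuallyEq hpf, fun a ha => ?_⟩
  have hle := hconv.coe_add_inner_le hfp hf a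
  show (p x).toReal + _ ≤ (p a).toReal
  rw [hpf.eq_of_nhds, ← EReal.toReal_coe (f x + _)]
  exact EReal.toReal_le_toReal hle (EReal.coe_ne_bot _) ha

end ConvexAnalysis

section Conjugate

variable {E : Type*} [NormedAddCommGroup E] [InnerProductSpace ℝ E]

/-- `φ* b - (⟪b, x₀⟫ - φ x₀)`, where `φ*` is the Legendre transform of `φ` restricted to `A`.
For `x₀ ∈ A` this is nonnegative, so the truncation by `ENNReal.ofReal` loses nothing. -/
def shiftedConjugate (φ : E → ℝ) (A : Set E) (x₀ b : E) : ℝ≥0∞ :=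
  ⨆ a : A, ENNReal.ofReal (⟪b, (a : E) - x₀⟫ - (φ a - φ x₀))

variable {φ : E → ℝ} {A : Set E} {x₀ x a b : E}

theorem measurable_shiftedConjugate [MeasurableSpace E] [OpensMeasurableSpace E] :
    Measurable (shiftedConjugate φ A x₀) :=
  (lowerSemicontinuous_iSup fun _ => (ENNReal.continuous_ofReal.comp
    ((continuous_id.inner continuous_const).sub continuous_const)).lowerSemicontinuous).measurable

theorem ofReal_le_shiftedConjugate (ha : a ∈ A) :
    ENNReal.ofReal (⟪b, a - x₀⟫ - (φ a - φ x₀)) ≤ shiftedConjugate φ A x₀ b :=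
  le_iSup (fun a : A => ENNReal.ofReal (⟪b, (a : E) - x₀⟫ - (φ a - φ x₀))) ⟨a, ha⟩

theorem inner_sub_le_toReal_shiftedConjugate (ha : a ∈ A) (hb : shiftedConjugate φ A x₀ b ≠ ∞) :
    ⟪b, a - x₀⟫ - (φ a - φ x₀) ≤ (shiftedConjugate φ A x₀ b).toReal :=
  ENNReal.ofReal_le_iff_le_toReal hb |>.1 (ofReal_le_shiftedConjugate ha)

theorem HasSubgradientOn.shiftedConjugate_eq (hx : x ∈ A) (hb : HasSubgradientOn φ A x b) :
    shiftedConjugate φ A x₀ b = ENNReal.ofReal (⟪b, x - x₀⟫ - (φ x - φ x₀)) := by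
  refine le_antisymm (iSup_le fun a => ENNReal.ofReal_le_ofReal ?_) (ofReal_le_shiftedConjugate hx)
  have := hb a a.2
  have hsplit : ⟪b, (a : E) - x₀⟫ = ⟪b, x - x₀⟫ + ⟪b, a - x⟫ := by
    rw [← inner_add_right, sub_add_sub_cancel']
  linarith

theorem HasSubgradientOn.toReal_shiftedConjugate (hx₀ : x₀ ∈ A) (hx : x ∈ A)
    (hb : HasSubgradientOn φ A x b) :
    (shiftedConjugate φ A x₀ b).toReal = ⟪b, x - x₀⟫ - (φ x - φ x₀) := by
  rw [hb.shiftedConjugate_eq hx, ENNReal.toReal_ofReal]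
  have := hb x₀ hx₀
  rw [← neg_sub x x₀, inner_neg_right] at this
  linarith

theorem hasSubgradientOn_of_toReal_shiftedConjugate_le (hb : shiftedConjugate φ A x₀ b ≠ ∞)
    (hle : (shiftedConjugate φ A x₀ b).toReal ≤ ⟪b, x - x₀⟫ - (φ x - φ x₀)) :
    HasSubgradientOn φ A x b := by
  intro a ha
  have := (inner_sub_le_toReal_shiftedConjugate ha hb).trans hle
  have hsplit : ⟪b, a - x₀⟫ = ⟪b, x - x₀⟫ + ⟪b, a - x⟫ := by
    rw [← inner_add_right, sub_add_sub_cancel']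
  linarith

end Conjugate

section Transport

variable {E : Type*} [NormedAddCommGroup E] [InnerProductSpace ℝ E] [MeasurableSpace E]
  {μ : Measure E} [IsFiniteMeasure μ] {y ys : E → E}

theorem integral_norm_sub_sq_eq_of_map_eq [OpensMeasurableSpace E] (hid : MemLp id 2 μ)
    (hy : Measurable y) (hys : Measurable ys) (hyL2 : MemLp y 2 μ) (hysL2 : MemLp ys 2 μ)
    (hmap : μ.map y = μ.map ys) (x₀ : E) :
    ∫ x, ‖y x - x‖ ^ 2 ∂μ = ∫ x, ‖ys x - x‖ ^ 2 ∂μ + 2 * ∫ x, ⟪ys x - y x, x - x₀⟫ ∂μ := by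
  have hsq : ∀ {w : E → E}, MemLp w 2 μ → Integrable (fun x => ‖w x‖ ^ 2) μ :=
    fun hw => (memLp_two_iff_integrable_sq_norm hw.1).1 hw
  have hpoint : ∀ x, ‖y x - x‖ ^ 2 = ‖ys x - x‖ ^ 2 + (‖y x - x₀‖ ^ 2 - ‖ys x - x₀‖ ^ 2)
      + 2 * ⟪ys x - y x, x - x₀⟫ := by
    intro x
    rw [show y x - x = (y x - x₀) - (x - x₀) by abel,
      show ys x - x = (ys x - x₀) - (x - x₀) by abel,
      show ys x - y x = (ys x - x₀) - (y x - x₀) by abel]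
    simp only [norm_sub_sq_real, inner_sub_left]
    ring
  have hmapsq : ∫ x, ‖y x - x₀‖ ^ 2 ∂μ = ∫ x, ‖ys x - x₀‖ ^ 2 ∂μ :=
    integral_comp_eq_of_map_eq hy hys hmap (G := fun b => ‖b - x₀‖ ^ 2)
      (by fun_prop : Continuous fun b : E => ‖b - x₀‖ ^ 2).aestronglyMeasurable
  have hc : MemLp (fun _ => x₀) 2 μ := memLp_const x₀
  have i₁ : Integrable (fun x => ‖ys x - x‖ ^ 2) μ := hsq (hysL2.sub hid)
  have i₂ : Integrable (fun x => ‖y x - x₀‖ ^ 2) μ := hsq (hyL2.sub hc)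
  have i₃ : Integrable (fun x => ‖ys x - x₀‖ ^ 2) μ := hsq (hysL2.sub hc)
  have i₄ : Integrable (fun x => ⟪ys x - y x, x - x₀⟫) μ :=
    (hysL2.sub hyL2).integrable_inner (hid.sub hc)
  have i₂₃ : Integrable (fun x => ‖y x - x₀‖ ^ 2 - ‖ys x - x₀‖ ^ 2) μ := i₂.sub i₃
  have i₁₂₃ : Integrable (fun x => ‖ys x - x‖ ^ 2 + (‖y x - x₀‖ ^ 2 - ‖ys x - x₀‖ ^ 2)) μ :=
    i₁.add i₂₃
  simp_rw [hpoint]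
  rw [integral_add i₁₂₃ (i₄.const_mul 2), integral_add i₁ i₂₃, integral_sub i₂ i₃, hmapsq,
    integral_const_mul, sub_self, add_zero]

variable {φ : E → ℝ} {A : Set E} {x₀ : E}

theorem lintegral_shiftedConjugate_ne_top (hid : MemLp id 2 μ) (hysL2 : MemLp ys 2 μ)
    (h₀ : HasSubgradientOn φ A x₀ (ys x₀))
    (hsub : ∀ᵐ x ∂μ, x ∈ A ∧ HasSubgradientOn φ A x (ys x)) :
    ∫⁻ x, shiftedConjugate φ A x₀ (ys x) ∂μ ≠ ∞ := by
  have hint : Integrable (fun x => ⟪ys x - ys x₀, x - x₀⟫) μ :=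
    (hysL2.sub (memLp_const _)).integrable_inner (hid.sub (memLp_const _))
  refine ne_top_of_le_ne_top hint.lintegral_lt_top.ne (lintegral_mono_ae ?_)
  filter_upwards [hsub] with x ⟨hx, hsubx⟩
  rw [hsubx.shiftedConjugate_eq hx]
  refine ENNReal.ofReal_le_ofReal ?_
  have := h₀ x hx
  rw [inner_sub_left]
  linarith

theorem integral_inner_nonneg_of_hasSubgradientOn [OpensMeasurableSpace E] (hid : MemLp id 2 μ)
    (hy : Measurable y) (hys : Measurable ys) (hyL2 : MemLp y 2 μ) (hysL2 : MemLp ys 2 μ)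
    (hmap : μ.map y = μ.map ys) (hx₀ : x₀ ∈ A) (h₀ : HasSubgradientOn φ A x₀ (ys x₀))
    (hsub : ∀ᵐ x ∂μ, x ∈ A ∧ HasSubgradientOn φ A x (ys x)) :
    0 ≤ ∫ x, ⟪ys x - y x, x - x₀⟫ ∂μ ∧
      (∫ x, ⟪ys x - y x, x - x₀⟫ ∂μ = 0 → ∀ᵐ x ∂μ, HasSubgradientOn φ A x (y x)) := by
  set Q := shiftedConjugate φ A x₀
  have hQ : Measurable Q := measurable_shiftedConjugate
  have hfin := lintegral_shiftedConjugate_ne_top hid hysL2 h₀ hsub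
  have hfin_y : ∀ᵐ x ∂μ, Q (y x) ≠ ∞ := by
    filter_upwards [ae_lt_top (hQ.comp hy) (lintegral_comp_eq_of_map_eq hy hys hmap hQ ▸ hfin)]
      with x hx using hx.ne
  -- a.e. equal to the Fenchel–Young gap `φ x + φ* (y x) - ⟪y x, x⟫`
  set gap : E → ℝ := fun x => (Q (y x)).toReal - (Q (ys x)).toReal + ⟪ys x - y x, x - x₀⟫
  have hgap_nonneg : 0 ≤ᵐ[μ] gap := by
    filter_upwards [hsub, hfin_y] with x ⟨hx, hsubx⟩ hQx
    have hy_le : ⟪y x, x - x₀⟫ - (φ x - φ x₀) ≤ (Q (y x)).toReal :=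
      inner_sub_le_toReal_shiftedConjugate hx hQx
    have hys_eq : (Q (ys x)).toReal = ⟪ys x, x - x₀⟫ - (φ x - φ x₀) :=
      hsubx.toReal_shiftedConjugate hx₀ hx
    simp only [Pi.zero_apply, gap, inner_sub_left]
    linarith
  have hQy := integrable_toReal_comp_of_map_eq hy hys hmap hQ hfin
  have hQys : Integrable (fun x => (Q (ys x)).toReal) μ :=
    integrable_toReal_of_lintegral_ne_top (hQ.comp hys).aemeasurable hfin
  have hQdiff : Integrable (fun x => (Q (y x)).toReal - (Q (ys x)).toReal) μ := hQy.sub hQys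
  have hinner : Integrable (fun x => ⟪ys x - y x, x - x₀⟫) μ :=
    (hysL2.sub hyL2).integrable_inner (hid.sub (memLp_const _))
  have hgap_int : Integrable gap μ := hQdiff.add hinner
  have hgap_eq : ∫ x, gap x ∂μ = ∫ x, ⟪ys x - y x, x - x₀⟫ ∂μ := by
    simp only [gap]
    rw [integral_add hQdiff hinner, integral_sub hQy hQys,
      integral_toReal_comp_eq_of_map_eq hy hys hmap hQ hfin, sub_self, zero_add]
  refine ⟨hgap_eq ▸ integral_nonneg_of_ae hgap_nonneg, fun hzero => ?_⟩
  have hgap_zero := (integral_eq_zero_iff_of_nonneg_ae hgap_nonneg hgap_int).1 (hgap_eq ▸ hzero)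
  filter_upwards [hsub, hfin_y, hgap_zero] with x ⟨hx, hsubx⟩ hQx hgapx
  refine hasSubgradientOn_of_toReal_shiftedConjugate_le hQx ?_
  have hys_eq : (Q (ys x)).toReal = ⟪ys x, x - x₀⟫ - (φ x - φ x₀) :=
    hsubx.toReal_shiftedConjugate hx₀ hx
  simp only [Pi.zero_apply, gap, inner_sub_left] at hgapx
  linarith

theorem integral_norm_sub_sq_le_of_hasGradientAt [OpensMeasurableSpace E] [CompleteSpace E]
    [SecondCountableTopology E] [NeZero μ] (hid : MemLp id 2 μ) (hy : Measurable y)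
    (hys : Measurable ys) (hyL2 : MemLp y 2 μ) (hmap : μ.map y = μ.map ys)
    (hφ : ∀ᵐ x ∂μ, A ∈ 𝓝 x ∧ HasGradientAt φ (ys x) x ∧ HasSubgradientOn φ A x (ys x)) :
    ∫ x, ‖ys x - x‖ ^ 2 ∂μ ≤ ∫ x, ‖y x - x‖ ^ 2 ∂μ ∧
      (∫ x, ‖y x - x‖ ^ 2 ∂μ = ∫ x, ‖ys x - x‖ ^ 2 ∂μ → y =ᵐ[μ] ys) := by
  have hysL2 := hyL2.of_map_eq hy hys hmap
  have hsub : ∀ᵐ x ∂μ, x ∈ A ∧ HasSubgradientOn φ A x (ys x) :=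
    hφ.mono fun x h => ⟨mem_of_mem_nhds h.1, h.2.2⟩
  obtain ⟨x₀, hx₀, h₀⟩ := hsub.exists
  obtain ⟨hnonneg, hrigid⟩ :=
    integral_inner_nonneg_of_hasSubgradientOn hid hy hys hyL2 hysL2 hmap hx₀ h₀ hsub
  have hcost := integral_norm_sub_sq_eq_of_map_eq hid hy hys hyL2 hysL2 hmap x₀
  refine ⟨by linarith, fun heq => ?_⟩
  filter_upwards [hφ, hrigid (by linarith)] with x ⟨hA, hgrad, _⟩ hyx
  exact hgrad.eq_of_eventually_add_inner_le (eventually_of_mem hA hyx)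

end Transport

theorem HasConvexPotential.exists_potential {d : ℕ} {D : Set (EuclideanSpace ℝ (Fin d))}
    {ys : EuclideanSpace ℝ (Fin d) → EuclideanSpace ℝ (Fin d)} (h : HasConvexPotential D ys) :
    ∃ (A : Set (EuclideanSpace ℝ (Fin d))) (φ : EuclideanSpace ℝ (Fin d) → ℝ),
      ∀ᵐ x ∂volume.restrict D,
        A ∈ 𝓝 x ∧ HasGradientAt φ (ys x) x ∧ HasSubgradientOn φ A x (ys x) := by
  obtain ⟨p, -, hconv, hp⟩ := h
  exact ⟨_, _, hp.mono fun x ⟨f, hfp, hf⟩ => IsConvexEReal.hasSubgradientOn_toReal hconv hfp hf⟩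

theorem IsNiceDomain.isProbabilityMeasure {d : ℕ} {D : Set (EuclideanSpace ℝ (Fin d))}
    (hD : IsNiceDomain D) : IsProbabilityMeasure (volume.restrict D) :=
  ⟨by rw [Measure.restrict_apply_univ]; exact hD.2.2⟩

theorem IsNiceDomain.memLp_id {d : ℕ} {D : Set (EuclideanSpace ℝ (Fin d))}
    (hD : IsNiceDomain D) : MemLp id 2 (volume.restrict D) := by
  have := hD.isProbabilityMeasure
  obtain ⟨⟨U, -, -, hU, rfl⟩, -, -⟩ := hD
  obtain ⟨R, hR⟩ := isBounded_iff_forall_norm_le.1 hU.closure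
  exact MemLp.of_bound aestronglyMeasurable_id R
    ((ae_restrict_mem isClosed_closure.measurableSet).mono hR)

theorem convex_rearrangement_minimizes_transport_cost_general
    {d : ℕ} (D : Set (EuclideanSpace ℝ (Fin d))) (hD : IsNiceDomain D)
    (y0 : EuclideanSpace ℝ (Fin d) → EuclideanSpace ℝ (Fin d))
    -- `ys = (y⁰)*` : the unique rearrangement of `y⁰` in the class `C`
    (ys : EuclideanSpace ℝ (Fin d) → EuclideanSpace ℝ (Fin d))
    (hysm : Measurable ys) (hysC : HasConvexPotential D ys)
    (hysr : Measure.map ys (volume.restrict D) = Measure.map y0 (volume.restrict D)) :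
    ∀ y : EuclideanSpace ℝ (Fin d) → EuclideanSpace ℝ (Fin d),
      Measurable y → MemLp y 2 (volume.restrict D) →
      Measure.map y (volume.restrict D) = Measure.map y0 (volume.restrict D) →
      (∫ x in D, ‖ys x - x‖ ^ 2) ≤ (∫ x in D, ‖y x - x‖ ^ 2) ∧
      ((∫ x in D, ‖y x - x‖ ^ 2) = (∫ x in D, ‖ys x - x‖ ^ 2) →
        y =ᵐ[volume.restrict D] ys) := by
  intro y hy hyL2 hyr
  have := hD.isProbabilityMeasure
  obtain ⟨A, φ, hφ⟩ := hysC.exists_potential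
  exact integral_norm_sub_sq_le_of_hasGradientAt hD.memLp_id hy hysm hyL2 (hyr.trans hysr.symm) hφ

/-- **`y*` is the optimal rearrangement.**  Among all rearrangements `y` of a given `L²`
map `y⁰` (maps with the same image measure), the unique rearrangement `y*` of `y⁰` with
convex potential is the unique (up to a.e. equality) minimizer of the transportation cost
`∫_D |y(x) - x|² dx`. -/
theorem convex_rearrangement_minimizes_transport_cost
    {d : ℕ} (D : Set (EuclideanSpace ℝ (Fin d))) (hD : IsNiceDomain D)
    (y0 : EuclideanSpace ℝ (Fin d) → EuclideanSpace ℝ (Fin d))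
    (hy0 : Measurable y0) (hy0L2 : MemLp y0 2 (volume.restrict D))
    -- `ys = (y⁰)*` : the unique rearrangement of `y⁰` in the class `C`
    (ys : EuclideanSpace ℝ (Fin d) → EuclideanSpace ℝ (Fin d))
    (hysm : Measurable ys) (hysC : HasConvexPotential D ys)
    (hysr : Measure.map ys (volume.restrict D) = Measure.map y0 (volume.restrict D)) :
    ∀ y : EuclideanSpace ℝ (Fin d) → EuclideanSpace ℝ (Fin d),
      Measurable y → MemLp y 2 (volume.restrict D) →
      Measure.map y (volume.restrict D) = Measure.map y0 (volume.restrict D) →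
      (∫ x in D, ‖ys x - x‖ ^ 2) ≤ (∫ x in D, ‖y x - x‖ ^ 2) ∧
      ((∫ x in D, ‖y x - x‖ ^ 2) = (∫ x in D, ‖ys x - x‖ ^ 2) →
        y =ᵐ[volume.restrict D] ys) :=
  convex_rearrangement_minimizes_transport_cost_general D hD y0 ys hysm hysC hysr
end
end
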